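/- For n ≥ 1, the real vector space of ℝ³-valued homogeneous monogenic polynomials of degree n on ℝ³ has dimension 2n+3 over ℝ, while for n = 0 it has dimension 3. -/

import Mathlib

open scoped Quaternion
open MeasureTheory

noncomputable section

/-- Points of `ℝ³`, identified with quaternions `x₀ + x₁e₁ + x₂e₂` with zero `e₃`-part. -/
abbrev R3 := EuclideanSpace ℝ (Fin 3)

/-- The quaternion unit `e₁`. -/
def e1 : ℍ[ℝ] := ⟨0, 1, 0, 0⟩
/-- The quaternion unit `e₂`. -/
def e2 : ℍ[ℝ] := ⟨0, 0, 1, 0⟩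

/-- Partial derivative `∂ᵢ` of a function on `ℝ³`. -/
def pd {E : Type*} [NormedAddCommGroup E] [NormedSpace ℝ E]
    (i : Fin 3) (f : R3 → E) (x : R3) : E :=
  fderiv ℝ f x (EuclideanSpace.single i 1)

/-- `D̄f = ∂₀f + e₁∂₁f + e₂∂₂f` (acting from the left). -/
def DbarL (f : R3 → ℍ[ℝ]) (x : R3) : ℍ[ℝ] :=
  pd 0 f x + e1 * pd 1 f x + e2 * pd 2 f x

/-- `fD̄ = ∂₀f + (∂₁f)e₁ + (∂₂f)e₂` (acting from the right). -/
def DbarR (f : R3 → ℍ[ℝ]) (x : R3) : ℍ[ℝ] :=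
  pd 0 f x + pd 1 f x * e1 + pd 2 f x * e2

/-- `Df = ∂₀f − e₁∂₁f − e₂∂₂f`. -/
def DL (f : R3 → ℍ[ℝ]) (x : R3) : ℍ[ℝ] :=
  pd 0 f x - e1 * pd 1 f x - e2 * pd 2 f x

/-- The quaternion `a + b e₁ + c e₂` (zero `e₃`-part). -/
def mkQ (a b c : ℝ) : ℍ[ℝ] := ⟨a, b, c, 0⟩

/-- `ℝ³`-valued homogeneous monogenic polynomials of degree `n`: each component is a
homogeneous polynomial of degree `n`, the `e₃`-component vanishes, and `D̄f = 0`. -/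
def MonoPoly (n : ℕ) : Set (R3 → ℍ[ℝ]) :=
  {f | (∃ p₀ p₁ p₂ : MvPolynomial (Fin 3) ℝ,
          p₀.IsHomogeneous n ∧ p₁.IsHomogeneous n ∧ p₂.IsHomogeneous n ∧
          ∀ x : R3, f x = mkQ (MvPolynomial.eval (fun i => x i) p₀)
            (MvPolynomial.eval (fun i => x i) p₁) (MvPolynomial.eval (fun i => x i) p₂)) ∧
      ∀ x, DbarL f x = 0}

/-- `ℝ³`-valued homogeneous antimonogenic polynomials of degree `n` (`Df = 0`). -/
def AntiPoly (n : ℕ) : Set (R3 → ℍ[ℝ]) :=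
  {f | (∃ p₀ p₁ p₂ : MvPolynomial (Fin 3) ℝ,
          p₀.IsHomogeneous n ∧ p₁.IsHomogeneous n ∧ p₂.IsHomogeneous n ∧
          ∀ x : R3, f x = mkQ (MvPolynomial.eval (fun i => x i) p₀)
            (MvPolynomial.eval (fun i => x i) p₁) (MvPolynomial.eval (fun i => x i) p₂)) ∧
      ∀ x, DL f x = 0}

/-- `ℝ³`-valued homogeneous harmonic polynomials of degree `n`. -/
def HarmPoly (n : ℕ) : Set (R3 → ℍ[ℝ]) :=
  {f | (∃ p₀ p₁ p₂ : MvPolynomial (Fin 3) ℝ,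
          p₀.IsHomogeneous n ∧ p₁.IsHomogeneous n ∧ p₂.IsHomogeneous n ∧
          ∀ x : R3, f x = mkQ (MvPolynomial.eval (fun i => x i) p₀)
            (MvPolynomial.eval (fun i => x i) p₁) (MvPolynomial.eval (fun i => x i) p₂)) ∧
      ∀ x, pd 0 (pd 0 f) x + pd 1 (pd 1 f) x + pd 2 (pd 2 f) x = 0}

/-!
Writing `f = p₀ + p₁e₁ + p₂e₂`, the equation `D̄f = 0` says that the field `(p₀, -p₁, -p₂)` is
curl-free and divergence-free. A curl-free field of homogeneous polynomials of degree `n` is, by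
Euler's identity, the gradient of the homogeneous potential `h = (x₀p₀ - x₁p₁ - x₂p₂)/(n+1)`, and
it is divergence-free exactly when `h` is harmonic. Hence `h ↦ ∂₀h - e₁∂₁h - e₂∂₂h` maps the
harmonic homogeneous polynomials of degree `n+1` isomorphically onto the monogenic ones of
degree `n`. The Laplacian maps homogeneous polynomials of degree `m+2` onto those of degree `m`,
so the harmonic ones of degree `m` in three variables form a space of dimension
`C(m+2,2) - C(m,2) = 2m+1`.
-/

open Module

namespace MvPolynomial

section CommSemiring

variable {σ R : Type*} [CommSemiring R]

instance [Finite σ] (n : ℕ) : Module.Finite R (homogeneousSubmodule σ R n) :=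
  Module.Finite.iff_fg.mpr (homogeneousSubmodule_fg σ R n)

theorem pderiv_eq_zero_of_isHomogeneous_zero {p : MvPolynomial σ R} (hp : p.IsHomogeneous 0)
    (i : σ) : pderiv i p = 0 := by
  rw [← totalDegree_zero_iff_isHomogeneous, totalDegree_eq_zero_iff_eq_C] at hp
  rw [hp, pderiv_C]

theorem pderiv_pderiv_monomial (i : σ) (s : σ →₀ ℕ) (r : R) :
    pderiv i (pderiv i (monomial s r)) =
      monomial (s - Finsupp.single i 2) (r * s i * (s i - 1 : ℕ)) := by
  rw [pderiv_monomial, pderiv_monomial, tsub_tsub, ← Finsupp.single_add]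
  simp [mul_assoc]

theorem pderiv_pderiv_monomial_add_single (i : σ) (d : σ →₀ ℕ) (r : R) :
    pderiv i (pderiv i (monomial (d + Finsupp.single i 2) r)) =
      monomial d (r * ((d i + 2) * (d i + 1))) := by
  rw [pderiv_pderiv_monomial, add_tsub_cancel_right]
  simp [mul_assoc]

variable [Fintype σ]

theorem isHomogeneous_sum_X_mul {p : σ → MvPolynomial σ R} {n : ℕ}
    (hp : ∀ i, (p i).IsHomogeneous n) : (∑ i, X i * p i).IsHomogeneous (n + 1) :=
  IsHomogeneous.sum _ _ _ fun i _ => by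
    simpa [add_comm] using (isHomogeneous_X R i).mul (hp i)

theorem pderiv_sum_X_mul_of_pderiv_symm {p : σ → MvPolynomial σ R} {n : ℕ}
    (hp : ∀ i, (p i).IsHomogeneous n) (hsymm : ∀ i j, pderiv i (p j) = pderiv j (p i)) (j : σ) :
    pderiv j (∑ i, X i * p i) = (n + 1) • p j := by
  classical
  calc pderiv j (∑ i, X i * p i)
      = ∑ i, (Pi.single (M := fun _ => MvPolynomial σ R) j 1 i * p i + X i * pderiv i (p j)) := by
        simp only [map_sum, pderiv_mul, pderiv_X, hsymm j]
    _ = p j + n • p j := by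
        rw [Finset.sum_add_distrib, (hp j).sum_X_mul_pderiv]
        simp [Pi.single_apply]
    _ = (n + 1) • p j := by rw [succ_nsmul']

variable (σ R) in
def laplacian : MvPolynomial σ R →ₗ[R] MvPolynomial σ R :=
  ∑ i, (pderiv i).toLinearMap ∘ₗ (pderiv i).toLinearMap

theorem laplacian_apply (p : MvPolynomial σ R) :
    laplacian σ R p = ∑ i, pderiv i (pderiv i p) := by
  simp [laplacian]

theorem IsHomogeneous.laplacian {p : MvPolynomial σ R} {k : ℕ} (hp : p.IsHomogeneous (k + 2)) :
    (laplacian σ R p).IsHomogeneous k := by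
  rw [laplacian_apply]
  exact IsHomogeneous.sum _ _ _ fun i _ => by simpa using (hp.pderiv (i := i)).pderiv (i := i)

theorem laplacian_eq_zero_of_isHomogeneous {p : MvPolynomial σ R} {m : ℕ}
    (hp : p.IsHomogeneous m) (hm : m ≤ 1) : laplacian σ R p = 0 := by
  rw [laplacian_apply]
  refine Finset.sum_eq_zero fun i _ => pderiv_eq_zero_of_isHomogeneous_zero ?_ i
  simpa [Nat.sub_eq_zero_of_le hm] using hp.pderiv (i := i)

end CommSemiring

theorem pderiv_pderiv_comm {σ R : Type*} [CommRing R] (i j : σ) (p : MvPolynomial σ R) :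
    pderiv i (pderiv j p) = pderiv j (pderiv i p) := by
  have hcomm : ⁅pderiv (σ := σ) (R := R) i, pderiv (R := R) j⁆ = 0 :=
    derivation_ext fun k => by
      classical
      rw [Derivation.commutator_apply, pderiv_X, pderiv_X, Pi.single_apply, Pi.single_apply]
      split_ifs <;> simp
  have h := congr($hcomm p)
  rwa [Derivation.commutator_apply, Derivation.zero_apply, sub_eq_zero] at h

theorem finrank_homogeneousSubmodule (σ K : Type*) [Fintype σ] [Field K] (n : ℕ) :
    finrank K (homogeneousSubmodule σ K n) = (Fintype.card σ).multichoose n := by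
  classical
  rw [homogeneousSubmodule_eq_finsupp_supported, ← restrictSupport,
    finrank_eq_nat_card_basis (basisRestrictSupport K _), ← Sym.card_sym_eq_multichoose,
    ← Nat.card_eq_fintype_card]
  exact Nat.card_congr (Sym.equivNatSum σ n).symm

section Field

variable {σ K : Type*} [Fintype σ] [Field K]

variable (σ K) in
def harmonicSubmodule (m : ℕ) : Submodule K (homogeneousSubmodule σ K m) :=
  LinearMap.ker ((laplacian σ K).domRestrict (homogeneousSubmodule σ K m))

theorem mem_harmonicSubmodule {m : ℕ} {p : homogeneousSubmodule σ K m} :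
    p ∈ harmonicSubmodule σ K m ↔ laplacian σ K p = 0 :=
  LinearMap.mem_ker

theorem harmonicSubmodule_eq_top {m : ℕ} (hm : m ≤ 1) : harmonicSubmodule σ K m = ⊤ :=
  eq_top_iff.mpr fun p _ => laplacian_eq_zero_of_isHomogeneous p.2 hm

variable [CharZero K]

theorem eq_zero_of_forall_pderiv_eq_zero {p : MvPolynomial σ K} {n : ℕ}
    (hp : p.IsHomogeneous (n + 1)) (hd : ∀ i, pderiv i p = 0) : p = 0 := by
  have h := hp.sum_X_mul_pderiv
  simp only [hd, mul_zero, Finset.sum_const_zero] at h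
  rw [← Nat.cast_smul_eq_nsmul K] at h
  exact (smul_eq_zero.mp h.symm).resolve_left (Nat.cast_ne_zero.mpr n.succ_ne_zero)

theorem exists_isHomogeneous_pderiv_eq {p : σ → MvPolynomial σ K} {n : ℕ}
    (hp : ∀ i, (p i).IsHomogeneous n) (hsymm : ∀ i j, pderiv i (p j) = pderiv j (p i)) :
    ∃ h : MvPolynomial σ K, h.IsHomogeneous (n + 1) ∧ ∀ i, pderiv i h = p i := by
  refine ⟨C ((n + 1 : ℕ) : K)⁻¹ * ∑ i, X i * p i, (isHomogeneous_sum_X_mul hp).C_mul _,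
    fun i => ?_⟩
  rw [pderiv_C_mul, pderiv_sum_X_mul_of_pderiv_symm hp hsymm, C_mul', ← Nat.cast_smul_eq_nsmul K,
    smul_smul, inv_mul_cancel₀ (Nat.cast_ne_zero.mpr n.succ_ne_zero), one_smul]

/-- Induction on `deg d - dᵢ₀`: with `c = r / ((dᵢ₀+2)(dᵢ₀+1))`, `Δ (c x^d xᵢ₀²)` is `r x^d` plus
the terms `∂ᵢ² (c x^d xᵢ₀²)`, `i ≠ i₀`, in which the exponent of `xᵢ₀` is larger. -/
theorem monomial_mem_map_laplacian (i₀ : σ) {k : ℕ} {d : σ →₀ ℕ} (hd : d.degree = k) (r : K) :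
    monomial d r ∈ (homogeneousSubmodule σ K (k + 2)).map (laplacian σ K) := by
  induction hN : k - d i₀ using Nat.strong_induction_on generalizing d r with
  | _ N ih =>
  classical
  set S := (homogeneousSubmodule σ K (k + 2)).map (laplacian σ K)
  set d' := d + Finsupp.single i₀ 2
  set c := r / ((d i₀ + 2) * (d i₀ + 1))
  have hd'i : ∀ i ≠ i₀, d' i = d i := fun i hi => by simp [d', hi.symm]
  have hΔ : laplacian σ K (monomial d' c) =
      monomial d r + ∑ i ∈ Finset.univ.erase i₀, pderiv i (pderiv i (monomial d' c)) := by
    have h1 : (d i₀ : K) + 2 ≠ 0 := by exact_mod_cast (d i₀ + 1).succ_ne_zero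
    have h2 : (d i₀ : K) + 1 ≠ 0 := by exact_mod_cast (d i₀).succ_ne_zero
    rw [laplacian_apply, ← Finset.add_sum_erase _ _ (Finset.mem_univ i₀),
      pderiv_pderiv_monomial_add_single, div_mul_cancel₀ _ (mul_ne_zero h1 h2)]
  have hrest : ∀ i ∈ Finset.univ.erase i₀, pderiv i (pderiv i (monomial d' c)) ∈ S := by
    intro i hi
    have hi : i ≠ i₀ := Finset.ne_of_mem_erase hi
    rw [pderiv_pderiv_monomial, hd'i i hi]
    by_cases h2 : 2 ≤ d i
    · set e := d' - Finsupp.single i 2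
      have he : e + Finsupp.single i 2 = d' :=
        tsub_add_cancel_of_le (Finsupp.single_le_iff.mpr (by rw [hd'i i hi]; exact h2))
      have hedeg : e.degree = k := by
        have := congr_arg Finsupp.degree he
        rw [map_add, Finsupp.degree_single, map_add, Finsupp.degree_single, hd] at this
        omega
      have hei₀ : e i₀ = d i₀ + 2 := by simp [e, d', hi]
      have := Finsupp.le_degree i₀ e
      exact ih (k - e i₀) (by omega) hedeg _ rfl
    · have : (d i : K) * ((d i - 1 : ℕ) : K) = 0 := by
        interval_cases d i <;> simp
      rw [mul_assoc, this, mul_zero, monomial_zero]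
      exact S.zero_mem
  have hmem : laplacian σ K (monomial d' c) ∈ S :=
    Submodule.mem_map_of_mem (isHomogeneous_monomial _ (by rw [map_add, Finsupp.degree_single, hd]))
  simpa [hΔ] using S.sub_mem hmem (S.sum_mem hrest)

theorem map_laplacian_homogeneousSubmodule [Nonempty σ] (k : ℕ) :
    (homogeneousSubmodule σ K (k + 2)).map (laplacian σ K) = homogeneousSubmodule σ K k := by
  refine le_antisymm ?_ fun q hq => ?_
  · rintro _ ⟨p, hp, rfl⟩
    exact IsHomogeneous.laplacian hp
  · rw [q.as_sum]
    exact Submodule.sum_mem _ fun d hd =>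
      monomial_mem_map_laplacian (Classical.arbitrary σ)
        (by rw [Finsupp.degree_eq_weight_one]; exact hq (mem_support_iff.mp hd)) _

theorem finrank_harmonicSubmodule_add [Nonempty σ] (k : ℕ) :
    finrank K (harmonicSubmodule σ K (k + 2)) + (Fintype.card σ).multichoose k =
      (Fintype.card σ).multichoose (k + 2) := by
  have h := LinearMap.finrank_range_add_finrank_ker
    ((laplacian σ K).domRestrict (homogeneousSubmodule σ K (k + 2)))
  rw [LinearMap.range_domRestrict, map_laplacian_homogeneousSubmodule,
    finrank_homogeneousSubmodule, finrank_homogeneousSubmodule] at h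
  rw [harmonicSubmodule]
  omega

variable (K) in
theorem finrank_harmonicSubmodule_fin_three (m : ℕ) :
    finrank K (harmonicSubmodule (Fin 3) K m) = 2 * m + 1 := by
  match m with
  | 0 | 1 =>
    rw [harmonicSubmodule_eq_top (by norm_num), finrank_top, finrank_homogeneousSubmodule,
      Fintype.card_fin]
    simp [Nat.multichoose_one_right]
  | k + 2 =>
    have h := finrank_harmonicSubmodule_add (σ := Fin 3) (K := K) k
    rw [Fintype.card_fin, Nat.multichoose_succ_succ 2 (k + 1), Nat.multichoose_succ_succ 2 k,
      Nat.multichoose_two, Nat.multichoose_two] at h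
    simp only [Nat.reduceAdd] at h
    omega

end Field

section EuclideanSpace

variable {σ : Type*}

theorem hasFDerivAt_eval [Fintype σ] (p : MvPolynomial σ ℝ) (x : EuclideanSpace ℝ σ) :
    HasFDerivAt (fun y : EuclideanSpace ℝ σ => eval (fun i => y i) p)
      (∑ i, eval (fun i => x i) (pderiv i p) • EuclideanSpace.proj (𝕜 := ℝ) (ι := σ) i) x := by
  induction p using MvPolynomial.induction_on with
  | C a => simpa using hasFDerivAt_const a x
  | add p q hp hq =>
    simp only [map_add, add_smul, Finset.sum_add_distrib]
    exact hp.add hq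
  | mul_X p j hp =>
    classical
    simp only [eval_mul, eval_X]
    refine (hp.mul (EuclideanSpace.proj (𝕜 := ℝ) j).hasFDerivAt).congr_fderiv ?_
    ext v
    simp [pderiv_X, Pi.single_apply, add_mul, Finset.sum_add_distrib, Finset.mul_sum, mul_assoc,
      apply_ite]

theorem forall_eval_euclideanSpace_eq_zero_iff {p : MvPolynomial σ ℝ} :
    (∀ x : EuclideanSpace ℝ σ, eval (fun i => x i) p = 0) ↔ p = 0 :=
  ⟨fun h => funext fun v => by simpa using h (WithLp.toLp 2 v), by rintro rfl; simp⟩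

end EuclideanSpace

end MvPolynomial

open MvPolynomial

@[simp] theorem re_e1 : e1.re = 0 := rfl
@[simp] theorem imI_e1 : e1.imI = 1 := rfl
@[simp] theorem imJ_e1 : e1.imJ = 0 := rfl
@[simp] theorem imK_e1 : e1.imK = 0 := rfl
@[simp] theorem re_e2 : e2.re = 0 := rfl
@[simp] theorem imI_e2 : e2.imI = 0 := rfl
@[simp] theorem imJ_e2 : e2.imJ = 1 := rfl
@[simp] theorem imK_e2 : e2.imK = 0 := rfl
@[simp] theorem re_mkQ (a b c : ℝ) : (mkQ a b c).re = a := rfl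
@[simp] theorem imI_mkQ (a b c : ℝ) : (mkQ a b c).imI = b := rfl
@[simp] theorem imJ_mkQ (a b c : ℝ) : (mkQ a b c).imJ = c := rfl
@[simp] theorem imK_mkQ (a b c : ℝ) : (mkQ a b c).imK = 0 := rfl

def evalQ (p₀ p₁ p₂ : MvPolynomial (Fin 3) ℝ) (x : R3) : ℍ[ℝ] :=
  mkQ (eval (fun i => x i) p₀) (eval (fun i => x i) p₁) (eval (fun i => x i) p₂)

theorem evalQ_eq_zero_iff {p₀ p₁ p₂ : MvPolynomial (Fin 3) ℝ} :
    evalQ p₀ p₁ p₂ = 0 ↔ p₀ = 0 ∧ p₁ = 0 ∧ p₂ = 0 := by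
  refine ⟨fun h => ?_, by rintro ⟨rfl, rfl, rfl⟩; funext x; ext <;> simp [evalQ]⟩
  simp only [← forall_eval_euclideanSpace_eq_zero_iff]
  refine ⟨fun x => ?_, fun x => ?_, fun x => ?_⟩
  · simpa [evalQ] using congr_arg QuaternionAlgebra.re (congr_fun h x)
  · simpa [evalQ] using congr_arg QuaternionAlgebra.imI (congr_fun h x)
  · simpa [evalQ] using congr_arg QuaternionAlgebra.imJ (congr_fun h x)

theorem pd_evalQ (i : Fin 3) (p₀ p₁ p₂ : MvPolynomial (Fin 3) ℝ) (x : R3) :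
    pd i (evalQ p₀ p₁ p₂) x = evalQ (pderiv i p₀) (pderiv i p₁) (pderiv i p₂) x := by
  have hsplit : evalQ p₀ p₁ p₂ = (fun y => eval (fun i => y i) p₀ • (1 : ℍ[ℝ])) +
      (fun y => eval (fun i => y i) p₁ • e1) + (fun y => eval (fun i => y i) p₂ • e2) := by
    funext y
    ext <;> simp [evalQ, Quaternion.re_smul]
  have H := (((hasFDerivAt_eval p₀ x).smul_const (1 : ℍ[ℝ])).add
    ((hasFDerivAt_eval p₁ x).smul_const e1)).add ((hasFDerivAt_eval p₂ x).smul_const e2)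
  rw [pd, hsplit, H.fderiv]
  ext <;> simp [evalQ, PiLp.single_apply, Quaternion.re_smul]

theorem dbarL_evalQ (p₀ p₁ p₂ : MvPolynomial (Fin 3) ℝ) (x : R3) :
    DbarL (evalQ p₀ p₁ p₂) x =
      ⟨eval (fun i => x i) (pderiv 0 p₀ - pderiv 1 p₁ - pderiv 2 p₂),
       eval (fun i => x i) (pderiv 1 p₀ + pderiv 0 p₁),
       eval (fun i => x i) (pderiv 2 p₀ + pderiv 0 p₂),
       eval (fun i => x i) (pderiv 1 p₂ - pderiv 2 p₁)⟩ := by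
  rw [DbarL, pd_evalQ, pd_evalQ, pd_evalQ]
  ext <;> simp [evalQ, Quaternion.re_mul, Quaternion.imI_mul, Quaternion.imJ_mul,
    Quaternion.imK_mul] <;> ring

theorem forall_dbarL_evalQ_eq_zero_iff {p₀ p₁ p₂ : MvPolynomial (Fin 3) ℝ} :
    (∀ x, DbarL (evalQ p₀ p₁ p₂) x = 0) ↔
      pderiv 0 p₀ = pderiv 1 p₁ + pderiv 2 p₂ ∧ pderiv 1 p₀ = -pderiv 0 p₁ ∧
        pderiv 2 p₀ = -pderiv 0 p₂ ∧ pderiv 1 p₂ = pderiv 2 p₁ := by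
  simp only [Quaternion.ext_iff]
  simp only [dbarL_evalQ, Quaternion.re_zero, Quaternion.imI_zero, Quaternion.imJ_zero,
    Quaternion.imK_zero, forall_and, forall_eval_euclideanSpace_eq_zero_iff, sub_sub, sub_eq_zero,
    add_eq_zero_iff_eq_neg]

def dPoly : MvPolynomial (Fin 3) ℝ →ₗ[ℝ] R3 → ℍ[ℝ] where
  toFun h := evalQ (pderiv 0 h) (-pderiv 1 h) (-pderiv 2 h)
  map_add' p q := by
    funext x
    ext <;> simp [evalQ] <;> ring
  map_smul' c p := by
    funext x
    ext <;> simp [evalQ, Quaternion.re_smul]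

theorem dPoly_apply (h : MvPolynomial (Fin 3) ℝ) :
    dPoly h = evalQ (pderiv 0 h) (-pderiv 1 h) (-pderiv 2 h) := rfl

theorem dPoly_mem_monoPoly {n : ℕ} {h : MvPolynomial (Fin 3) ℝ} (hh : h.IsHomogeneous (n + 1))
    (hlap : laplacian (Fin 3) ℝ h = 0) : dPoly h ∈ MonoPoly n := by
  have hd : ∀ i, (pderiv i h).IsHomogeneous n := fun i => by simpa using hh.pderiv (i := i)
  refine ⟨⟨_, _, _, hd 0, (hd 1).neg, (hd 2).neg, fun x => rfl⟩, ?_⟩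
  rw [dPoly_apply, forall_dbarL_evalQ_eq_zero_iff]
  rw [laplacian_apply, Fin.sum_univ_three] at hlap
  simp only [map_neg, neg_neg]
  exact ⟨by linear_combination hlap, pderiv_pderiv_comm _ _ _, pderiv_pderiv_comm _ _ _,
    by rw [pderiv_pderiv_comm]⟩

theorem exists_dPoly_eq_of_mem_monoPoly {n : ℕ} {f : R3 → ℍ[ℝ]} (hf : f ∈ MonoPoly n) :
    ∃ h : MvPolynomial (Fin 3) ℝ,
      h.IsHomogeneous (n + 1) ∧ laplacian (Fin 3) ℝ h = 0 ∧ dPoly h = f := by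
  obtain ⟨⟨p₀, p₁, p₂, hp₀, hp₁, hp₂, hfx⟩, hD⟩ := hf
  obtain rfl : f = evalQ p₀ p₁ p₂ := funext hfx
  obtain ⟨hdiv, h01, h02, h12⟩ := forall_dbarL_evalQ_eq_zero_iff.mp hD
  set g : Fin 3 → MvPolynomial (Fin 3) ℝ := ![p₀, -p₁, -p₂]
  have hg : ∀ i, (g i).IsHomogeneous n := by
    intro i
    fin_cases i
    exacts [hp₀, hp₁.neg, hp₂.neg]
  have hsymm : ∀ i j, pderiv i (g j) = pderiv j (g i) := by
    intro i j
    fin_cases i <;> fin_cases j <;> simp [g, h01, h02, h12]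
  obtain ⟨h, hh, hdh⟩ := exists_isHomogeneous_pderiv_eq hg hsymm
  refine ⟨h, hh, ?_, ?_⟩
  · rw [laplacian_apply, Fin.sum_univ_three, hdh, hdh, hdh]
    simp [g, hdiv]
  · rw [dPoly_apply, hdh, hdh, hdh]
    simp [g]

def harmonicToMonogenic (n : ℕ) : harmonicSubmodule (Fin 3) ℝ (n + 1) →ₗ[ℝ] R3 → ℍ[ℝ] :=
  dPoly ∘ₗ (homogeneousSubmodule (Fin 3) ℝ (n + 1)).subtype ∘ₗ
    (harmonicSubmodule (Fin 3) ℝ (n + 1)).subtype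

theorem harmonicToMonogenic_injective (n : ℕ) : Function.Injective (harmonicToMonogenic n) := by
  refine (injective_iff_map_eq_zero _).mpr fun h h0 => ?_
  obtain ⟨h0, h1, h2⟩ := evalQ_eq_zero_iff.mp h0
  have hd : ∀ i, pderiv i (h : MvPolynomial (Fin 3) ℝ) = 0 := by
    intro i
    fin_cases i
    exacts [h0, neg_eq_zero.mp h1, neg_eq_zero.mp h2]
  exact Subtype.ext (Subtype.ext (eq_zero_of_forall_pderiv_eq_zero h.1.2 hd))

theorem span_monoPoly_eq_range (n : ℕ) :
    Submodule.span ℝ (MonoPoly n) = LinearMap.range (harmonicToMonogenic n) := by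
  refine le_antisymm (Submodule.span_le.mpr fun f hf => ?_) ?_
  · obtain ⟨h, hh, hlap, rfl⟩ := exists_dPoly_eq_of_mem_monoPoly hf
    exact ⟨⟨⟨h, hh⟩, mem_harmonicSubmodule.mpr hlap⟩, rfl⟩
  · rintro _ ⟨h, rfl⟩
    exact Submodule.subset_span (dPoly_mem_monoPoly h.1.2 (mem_harmonicSubmodule.mp h.2))

theorem finrank_span_monoPoly (n : ℕ) :
    finrank ℝ (Submodule.span ℝ (MonoPoly n)) = 2 * n + 3 := by
  rw [span_monoPoly_eq_range, LinearMap.finrank_range_of_inj (harmonicToMonogenic_injective n),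
    finrank_harmonicSubmodule_fin_three]
  ring

/-- The space of `ℝ³`-valued homogeneous monogenic polynomials of degree `n` on `ℝ³`
has real dimension `2n+3` for `n ≥ 1`, and dimension `3` for `n = 0`. -/
theorem finrank_monogenic_polynomials :
    (∀ n : ℕ, 1 ≤ n →
      Module.finrank ℝ (Submodule.span ℝ (MonoPoly n)) = 2 * n + 3) ∧
    Module.finrank ℝ (Submodule.span ℝ (MonoPoly 0)) = 3 :=
  ⟨fun n _ => finrank_span_monoPoly n, finrank_span_monoPoly 0⟩
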